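/- arXiv:2010.00671 — 6 statements merged into one kernel-verified Lean document; each statement's English description precedes it below -/
import Mathlib

section
/- The function ψ is twice continuously differentiable on the interval [0,1]. -/
/-!
Split `a (2k+1) = (4/(2k+1)^4)·tanh((2k+1)π/2) − π/(2k+1)^3`. The `tanh` part has coefficients
`O(n⁻⁴)`, so its sine series, differentiated twice termwise, is still dominated by `∑ n⁻²` and is
`C²` on all of `ℝ`. The `π/n³` part is the sine series of a cubic Bernoulli polynomial: on `[0, 1]`,
`∑_{n odd} sin(nπz)/n³ = π³z(1−z)/8`, obtained from `∑_{n ≥ 1} sin(2πnx)/n³` at `x = z/2` minus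
its even terms.
-/

/-- `a n = (4/n^4)·tanh(nπ/2) − π/n^3`. -/
noncomputable def a (n : ℕ) : ℝ :=
  4 / (n : ℝ) ^ 4 * Real.tanh ((n : ℝ) * Real.pi / 2) - Real.pi / (n : ℝ) ^ 3

/-- `ψ(z) = (24/π^4) · Σ_{n odd} a_n · sin(nπz)`, the sum over odd positive integers. -/
noncomputable def psi (z : ℝ) : ℝ :=
  (24 / Real.pi ^ 4) * ∑' k : ℕ, a (2 * k + 1) * Real.sin ((2 * (k : ℝ) + 1) * Real.pi * z)

open Real Set Polynomial

theorem norm_iteratedFDeriv_const_mul_sin_mul_le (n : ℕ) (c ω x : ℝ) :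
    ‖iteratedFDeriv ℝ n (fun z => c * sin (ω * z)) x‖ ≤ |c| * |ω| ^ n := by
  rw [norm_iteratedFDeriv_eq_norm_iteratedDeriv, iteratedDeriv_const_mul_field,
    iteratedDeriv_comp_const_mul contDiff_sin, norm_mul, norm_mul, norm_pow]
  exact mul_le_mul_of_nonneg_left
    (mul_le_of_le_one_right (by positivity) (abs_iteratedDeriv_sin_le_one n _)) (abs_nonneg c)

section SineSeries

variable {N : ℕ} {c ω : ℕ → ℝ}

theorem contDiff_tsum_mul_sin (hω : ∀ k, 1 ≤ |ω k|) (hc : Summable fun k => |c k| * |ω k| ^ N) :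
    ContDiff ℝ N fun z => ∑' k, c k * sin (ω k * z) := by
  refine contDiff_tsum (v := fun n k => |c k| * |ω k| ^ n) (fun k => by fun_prop)
    (fun n hn => hc.of_nonneg_of_le (fun k => by positivity) fun k => ?_)
    (fun n k x _ => norm_iteratedFDeriv_const_mul_sin_mul_le n (c k) (ω k) x)
  gcongr
  · exact hω k
  · exact_mod_cast hn

theorem summable_mul_sin (hω : ∀ k, 1 ≤ |ω k|) (hc : Summable fun k => |c k| * |ω k| ^ N)
    (z : ℝ) : Summable fun k => c k * sin (ω k * z) := by
  refine hc.of_norm_bounded fun k => ?_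
  rw [norm_mul, Real.norm_eq_abs, Real.norm_eq_abs]
  exact mul_le_mul (le_refl _) ((abs_sin_le_one _).trans (one_le_pow₀ (hω k)))
    (abs_nonneg _) (abs_nonneg _)

end SineSeries

noncomputable def tanhCoeff (k : ℕ) : ℝ := 4 / (2 * (k : ℝ) + 1) ^ 4 * tanh ((2 * k + 1) * π / 2)

theorem one_le_abs_two_mul_add_one_mul_pi (k : ℕ) : 1 ≤ |(2 * (k : ℝ) + 1) * π| := by
  rw [abs_of_pos (by positivity)]
  nlinarith [pi_gt_three]

theorem summable_abs_tanhCoeff_mul_sq :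
    Summable fun k => |tanhCoeff k| * |(2 * (k : ℝ) + 1) * π| ^ 2 := by
  have hsummable : Summable fun k : ℕ => 4 * π ^ 2 * (1 / (2 * (k : ℝ) + 1) ^ 2) := by
    refine .mul_left _ ?_
    have := (Real.summable_one_div_nat_pow.mpr one_lt_two).comp_injective
      (i := fun k => 2 * k + 1) fun a b h => by simp only at h; omega
    simpa [Function.comp_def] using this
  refine hsummable.of_nonneg_of_le (fun k => by positivity) fun k => ?_
  rw [tanhCoeff, abs_mul, abs_of_pos (by positivity : 0 < 4 / (2 * (k : ℝ) + 1) ^ 4),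
    abs_of_pos (by positivity : 0 < (2 * (k : ℝ) + 1) * π)]
  calc 4 / (2 * (k : ℝ) + 1) ^ 4 * |tanh ((2 * k + 1) * π / 2)| * ((2 * k + 1) * π) ^ 2
      ≤ 4 / (2 * (k : ℝ) + 1) ^ 4 * 1 * ((2 * k + 1) * π) ^ 2 := by
        gcongr; exact (abs_tanh_lt_one _).le
    _ = 4 * π ^ 2 * (1 / (2 * (k : ℝ) + 1) ^ 2) := by field_simp

theorem Polynomial.bernoulli_three :
    bernoulli 3 = X ^ 3 - C (3 / 2 : ℚ) * X ^ 2 + C (1 / 2) * X := by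
  simp only [bernoulli, Finset.sum_range_succ, Finset.sum_range_zero]
  norm_num [bernoulli_eq_bernoulli'_of_ne_one, bernoulli'_two, bernoulli'_three,
    ← C_mul_X_pow_eq_monomial, sub_eq_add_neg]

theorem hasSum_one_div_nat_pow_three_mul_sin {x : ℝ} (hx : x ∈ Icc (0 : ℝ) 1) :
    HasSum (fun n : ℕ => 1 / (n : ℝ) ^ 3 * sin (2 * π * n * x))
      (π ^ 3 / 3 * (2 * x ^ 3 - 3 * x ^ 2 + x)) := by
  convert hasSum_one_div_nat_pow_mul_sin (k := 1) one_ne_zero hx using 1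
  simp [bernoulli_three]
  ring

theorem hasSum_one_div_odd_pow_three_mul_sin {z : ℝ} (hz : z ∈ Icc (0 : ℝ) 1) :
    HasSum (fun k : ℕ => 1 / (2 * (k : ℝ) + 1) ^ 3 * sin ((2 * k + 1) * π * z))
      (π ^ 3 * z * (1 - z) / 8) := by
  set f : ℕ → ℝ := fun n => 1 / (n : ℝ) ^ 3 * sin (2 * π * n * (z / 2))
  have hall : HasSum f _ :=
    hasSum_one_div_nat_pow_three_mul_sin ⟨by linarith [hz.1], by linarith [hz.2]⟩
  have heven : HasSum (fun k => f (2 * k)) (π ^ 3 / 3 * (2 * z ^ 3 - 3 * z ^ 2 + z) / 8) := by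
    refine ((hasSum_one_div_nat_pow_three_mul_sin hz).div_const 8).congr_fun fun k => ?_
    simp only [f]
    push_cast
    rw [show 2 * π * (2 * k) * (z / 2) = 2 * π * k * z by ring]
    ring
  have hodd : HasSum (fun k => f (2 * k + 1)) _ :=
    (hall.summable.comp_injective (i := fun k => 2 * k + 1) fun a b h => by
      simp only at h; omega).hasSum
  have hsplit := (heven.even_add_odd hodd).unique hall
  convert hodd using 1
  · funext k
    simp only [f]
    push_cast
    ring_nf
  · linear_combination -hsplit

theorem a_two_mul_add_one (k : ℕ) :
    a (2 * k + 1) = tanhCoeff k - π * (1 / (2 * (k : ℝ) + 1) ^ 3) := by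
  unfold a tanhCoeff
  push_cast
  ring

/-- `ψ` is twice continuously differentiable on `[0,1]`. -/
theorem psi_contDiffOn : ContDiffOn ℝ 2 psi (Set.Icc (0:ℝ) 1) := by
  have hsmooth : ContDiff ℝ 2 fun z => 24 / π ^ 4 *
      ((∑' k, tanhCoeff k * sin ((2 * k + 1) * π * z)) - π * (π ^ 3 * z * (1 - z) / 8)) :=
    contDiff_const.mul ((contDiff_tsum_mul_sin one_le_abs_two_mul_add_one_mul_pi
      summable_abs_tanhCoeff_mul_sq).sub (by fun_prop))
  refine hsmooth.contDiffOn.congr fun z hz => ?_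
  have hcubic := hasSum_one_div_odd_pow_three_mul_sin hz
  have htanh := summable_mul_sin one_le_abs_two_mul_add_one_mul_pi summable_abs_tanhCoeff_mul_sq z
  have hterm (k : ℕ) : a (2 * k + 1) * sin ((2 * k + 1) * π * z) = tanhCoeff k *
      sin ((2 * k + 1) * π * z) - π * (1 / (2 * (k : ℝ) + 1) ^ 3 * sin ((2 * k + 1) * π * z)) := by
    rw [a_two_mul_add_one]
    ring
  rw [psi, tsum_congr hterm, htanh.tsum_sub (hcubic.summable.mul_left π), tsum_mul_left,
    hcubic.tsum_eq]
end

section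
/- For all x with 0 ≤ x ≤ 1, Σ_{n odd} sin(nπx)/n^3 = (π^3/8) · x(1−x), where the sum runs over odd positive integers n. -/
open Real Set

lemma bern3_eval (y : ℝ) :
    (Polynomial.map (algebraMap ℚ ℝ) (Polynomial.bernoulli 3)).eval y
      = y^3 - 3/2*y^2 + 1/2*y := by
  rw [Polynomial.eval_map]
  simp only [Polynomial.bernoulli, Polynomial.eval₂_finset_sum, Finset.sum_range_succ,
    Finset.sum_range_zero, Polynomial.eval₂_add, Polynomial.eval₂_monomial, bernoulli,
    bernoulli'_zero, bernoulli'_one, bernoulli'_two, bernoulli'_three, Nat.choose,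
    Polynomial.eval₂_zero, map_zero, zero_add]
  norm_num
  ring

/-- For all `0 ≤ x ≤ 1`, `Σ_{n odd} sin(nπx)/n^3 = (π^3/8)·x(1−x)`,
the sum over odd positive integers. -/
theorem sum_sin_odd_cubed :
    ∀ x ∈ Set.Icc (0:ℝ) 1,
      ∑' k : ℕ, Real.sin ((2 * (k : ℝ) + 1) * Real.pi * x) / (2 * (k : ℝ) + 1) ^ 3
        = (Real.pi ^ 3 / 8) * x * (1 - x) := by
  intro x hx
  have hx2 : x / 2 ∈ Icc (0:ℝ) 1 := ⟨by linarith [hx.1], by linarith [hx.2]⟩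
  have A := hasSum_one_div_nat_pow_mul_sin (k := 1) one_ne_zero hx2
  have B := hasSum_one_div_nat_pow_mul_sin (k := 1) one_ne_zero hx
  set f : ℕ → ℝ := fun n => 1 / (n : ℝ) ^ (2 * 1 + 1) * Real.sin (2 * π * n * (x / 2)) with hf
  set g : ℕ → ℝ := fun n => 1 / (n : ℝ) ^ (2 * 1 + 1) * Real.sin (2 * π * n * x) with hg
  -- even part
  have heven : HasSum (fun m => f (2 * m)) ((((-1:ℝ)) ^ (1 + 1) * (2 * π) ^ (2 * 1 + 1) / 2 / ((2 * 1 + 1).factorial : ℝ) *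
      (Polynomial.map (algebraMap ℚ ℝ) (Polynomial.bernoulli (2 * 1 + 1))).eval x) / 8) := by
    have := B.div_const 8
    refine HasSum.congr_fun this ?_
    intro m
    simp only [hf, hg]
    have h8 : ((2 * m : ℕ) : ℝ) ^ (2 * 1 + 1) = 8 * (m : ℝ) ^ (2 * 1 + 1) := by push_cast; ring
    have harg : 2 * π * ((2 * m : ℕ) : ℝ) * (x / 2) = 2 * π * m * x := by push_cast; ring
    rw [h8, harg, one_div, one_div, mul_inv]
    ring
  -- odd part summable
  have hinj : Function.Injective (fun k : ℕ => 2 * k + 1) := fun a b h => by beta_reduce at h; omega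
  have hsummodd : Summable (fun k => f (2 * k + 1)) := A.summable.comp_injective hinj
  obtain ⟨c, hodd⟩ := hsummodd
  have htot := heven.even_add_odd hodd
  have hc : c = ((-1:ℝ)) ^ (1 + 1) * (2 * π) ^ (2 * 1 + 1) / 2 / ((2 * 1 + 1).factorial : ℝ) *
      (Polynomial.map (algebraMap ℚ ℝ) (Polynomial.bernoulli (2 * 1 + 1))).eval (x / 2)
      - (((-1:ℝ)) ^ (1 + 1) * (2 * π) ^ (2 * 1 + 1) / 2 / ((2 * 1 + 1).factorial : ℝ) *
      (Polynomial.map (algebraMap ℚ ℝ) (Polynomial.bernoulli (2 * 1 + 1))).eval x) / 8 := by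
    have := htot.unique A
    linarith
  have hrw : (fun k : ℕ => Real.sin ((2 * (k : ℝ) + 1) * Real.pi * x) / (2 * (k : ℝ) + 1) ^ 3)
      = fun k => f (2 * k + 1) := by
    funext k
    simp only [hf]
    have harg : 2 * π * ((2 * k + 1 : ℕ) : ℝ) * (x / 2) = (2 * (k : ℝ) + 1) * π * x := by
      push_cast; ring
    have h3 : ((2 * k + 1 : ℕ) : ℝ) ^ (2 * 1 + 1) = (2 * (k : ℝ) + 1) ^ 3 := by push_cast; ring
    rw [harg, h3]
    ring
  rw [hrw, hodd.tsum_eq, hc, show 2 * 1 + 1 = 3 from rfl, bern3_eval, bern3_eval]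
  have : ((Nat.factorial 3 : ℕ) : ℝ) = 6 := by norm_num [Nat.factorial]
  rw [this]
  ring
end

section
/- The series Σ_{n odd} n·a_n, taken over odd positive integers n, converges and equals 0; equivalently, Σ_{n odd} (4·tanh(nπ/2)/n^3 − π/n^2) = 0. -/
open Real

lemma hasSum_one_div_odd_sq : HasSum (fun k : ℕ => 1 / (2 * (k : ℝ) + 1) ^ 2) (π ^ 2 / 8) := by
  obtain ⟨T, hodd⟩ : Summable fun k : ℕ => 1 / (((2 * k + 1 : ℕ) : ℝ)) ^ 2 :=
    hasSum_zeta_two.summable.comp_injective fun i j h => by simpa using h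
  have heven : HasSum (fun k : ℕ => 1 / (((2 * k : ℕ) : ℝ)) ^ 2) (1 / 4 * (π ^ 2 / 6)) :=
    (hasSum_zeta_two.mul_left (1 / 4)).congr_fun fun k => by push_cast; ring
  have hsplit := (HasSum.even_add_odd (f := fun n : ℕ => 1 / (n : ℝ) ^ 2) heven hodd).unique
    hasSum_zeta_two
  have hT : T = π ^ 2 / 8 := by linear_combination hsplit
  exact hT ▸ hodd.congr_fun fun k => by push_cast; ring

theorem Summable.hasSum_zero_of_swap_eq_neg {α G : Type*} [AddCommGroup G] [TopologicalSpace G]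
    [IsTopologicalAddGroup G] [T2Space G] [IsAddTorsionFree G] {f : α × α → G}
    (hf : Summable f) (hswap : ∀ p, f p.swap = -f p) : HasSum f 0 := by
  obtain ⟨S, hS⟩ := hf
  have hneg : HasSum f (-S) :=
    ((Equiv.prodComm α α).hasSum_iff.mpr hS).neg.congr_fun fun p => by
      simp [hswap]
  rwa [self_eq_neg.mp (hS.unique hneg)] at hS

lemma ofReal_mul_I_mem_integerComplement {y : ℝ} (hy : y ≠ 0) :
    (y : ℂ) * Complex.I ∈ Complex.integerComplement := by
  rintro ⟨n, hn⟩
  exact hy (by simpa using (congrArg Complex.im hn).symm)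

lemma hasSum_coth_series (y : ℝ) (hy : y ≠ 0) :
    HasSum (fun n : ℕ => 2 * y / (y ^ 2 + ((n : ℝ) + 1) ^ 2))
      (π * (cosh (π * y) / sinh (π * y)) - 1 / y) := by
  have hx := ofReal_mul_I_mem_integerComplement hy
  have h := (summable_cotTerm hx).hasSum.mul_left Complex.I
  have hterm (n : ℕ) : Complex.I * cotTerm (y * Complex.I) n =
      ((2 * y / (y ^ 2 + ((n : ℝ) + 1) ^ 2) : ℝ) : ℂ) := by
    rw [cotTerm_identity hx, show (y * Complex.I + (n + 1)) * (y * Complex.I - (n + 1)) =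
        -((y ^ 2 + ((n : ℝ) + 1) ^ 2 : ℝ) : ℂ) by
      push_cast
      linear_combination (y : ℂ) ^ 2 * Complex.I_sq]
    have : (y : ℂ) ^ 2 + ((n : ℂ) + 1) ^ 2 ≠ 0 := by
      exact_mod_cast (by positivity : (0:ℝ) < y ^ 2 + ((n : ℝ) + 1) ^ 2).ne'
    push_cast
    field_simp
    linear_combination (-y : ℂ) * Complex.I_sq
  have hsum : Complex.I * ∑' n, cotTerm (y * Complex.I) n =
      ((π * (cosh (π * y) / sinh (π * y)) - 1 / y : ℝ) : ℂ) := by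
    have hs : sinh (π * y) ≠ 0 := by simp [hy, pi_ne_zero]
    rw [← cot_series_rep' hx,
      show (π : ℂ) * (y * Complex.I) = ((π * y : ℝ) : ℂ) * Complex.I by push_cast; ring,
      Complex.cot, Complex.cos_mul_I, Complex.sin_mul_I]
    push_cast
    field_simp
  simp only [hterm, hsum] at h
  exact Complex.hasSum_ofReal.mp h

lemma two_mul_coth_two_mul_sub_coth {u : ℝ} (hu : u ≠ 0) :
    2 * (cosh (2 * u) / sinh (2 * u)) - cosh u / sinh u = tanh u := by
  have hs : sinh u ≠ 0 := by simpa using hu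
  rw [cosh_two_mul, sinh_two_mul, tanh_eq_sinh_div_cosh]
  field_simp
  ring

lemma hasSum_tanh_series (y : ℝ) :
    HasSum (fun k : ℕ => 4 * y / (y ^ 2 + (2 * (k : ℝ) + 1) ^ 2)) (π * tanh (π * y / 2)) := by
  rcases eq_or_ne y 0 with rfl | hy
  · simp
  have hall := ((hasSum_coth_series y hy).mul_left 2).congr_fun
    (g := fun n : ℕ => 4 * y / (y ^ 2 + ((n : ℝ) + 1) ^ 2)) fun n => by ring
  -- the odd-indexed terms have denominators `y² + (2k + 2)²`: they form the series at `y / 2`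
  have hodd := (hasSum_coth_series (y / 2) (by simpa using hy)).congr_fun
    (g := fun k : ℕ => 4 * y / (y ^ 2 + (((2 * k + 1 : ℕ) : ℝ) + 1) ^ 2)) fun k => by
      push_cast
      field_simp
      ring
  obtain ⟨T, heven⟩ : Summable fun k : ℕ => 4 * y / (y ^ 2 + (((2 * k : ℕ) : ℝ) + 1) ^ 2) :=
    hall.summable.comp_injective (mul_right_injective₀ two_ne_zero)
  have hsplit := (HasSum.even_add_odd
    (f := fun n : ℕ => 4 * y / (y ^ 2 + ((n : ℝ) + 1) ^ 2)) heven hodd).unique hall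
  have hcoth := two_mul_coth_two_mul_sub_coth (u := π * (y / 2)) (by positivity)
  rw [show 2 * (π * (y / 2)) = π * y by ring, show π * (y / 2) = π * y / 2 by ring] at hcoth
  rw [show π * (y / 2) = π * y / 2 by ring] at hsplit
  have hT : T = π * tanh (π * y / 2) := by linear_combination hsplit + π * hcoth
  refine hT ▸ heven.congr_fun fun k => ?_
  push_cast
  ring

noncomputable def doubleTerm (n m : ℝ) : ℝ := 2 / (n ^ 2 * (n ^ 2 + m ^ 2)) - 1 / (n ^ 2 * m ^ 2)

lemma doubleTerm_swap {n m : ℝ} (hn : n ≠ 0) (hm : m ≠ 0) :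
    doubleTerm m n = -doubleTerm n m := by
  have : n ^ 2 + m ^ 2 ≠ 0 := by positivity
  unfold doubleTerm
  field_simp
  ring

lemma abs_doubleTerm_le {n m : ℝ} (hn : n ≠ 0) (hm : m ≠ 0) :
    |doubleTerm n m| ≤ 3 / (n ^ 2 * m ^ 2) := by
  have hA : 0 ≤ 2 / (n ^ 2 * (n ^ 2 + m ^ 2)) := by positivity
  have hAB : 2 / (n ^ 2 * (n ^ 2 + m ^ 2)) ≤ 2 / (n ^ 2 * m ^ 2) := by
    gcongr
    linarith [sq_nonneg n]
  have hB : 0 < 1 / (n ^ 2 * m ^ 2) := by positivity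
  rw [div_eq_mul_one_div 2 (n ^ 2 * m ^ 2)] at hAB
  rw [doubleTerm, abs_le, div_eq_mul_one_div 3]
  constructor <;> linarith

lemma summable_doubleTerm_odd :
    Summable fun p : ℕ × ℕ => doubleTerm (2 * p.1 + 1) (2 * p.2 + 1) := by
  have hodd := hasSum_one_div_odd_sq.summable
  refine Summable.of_norm_bounded ((hodd.mul_of_nonneg hodd (fun _ => by positivity)
    (fun _ => by positivity)).mul_left 3) fun p =>
      (abs_doubleTerm_le (by positivity) (by positivity)).trans_eq
        (by rw [one_div_mul_one_div, mul_one_div])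

lemma hasSum_doubleTerm_odd {n : ℝ} (hn : n ≠ 0) :
    HasSum (fun l : ℕ => doubleTerm n (2 * l + 1))
      (π / 8 * (4 * tanh (n * π / 2) / n ^ 3 - π / n ^ 2)) := by
  have h := ((hasSum_tanh_series n).mul_left (1 / (2 * n ^ 3))).sub
    (hasSum_one_div_odd_sq.mul_left (1 / n ^ 2))
  have hval : 1 / (2 * n ^ 3) * (π * tanh (π * n / 2)) - 1 / n ^ 2 * (π ^ 2 / 8) =
      π / 8 * (4 * tanh (n * π / 2) / n ^ 3 - π / n ^ 2) := by
    rw [mul_comm π n]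
    field_simp
    ring
  refine hval ▸ h.congr_fun fun l => ?_
  have : n ^ 2 + (2 * (l : ℝ) + 1) ^ 2 ≠ 0 := by positivity
  have : 2 * (l : ℝ) + 1 ≠ 0 := by positivity
  unfold doubleTerm
  field_simp
  ring

lemma natCast_mul_a {n : ℕ} (hn : n ≠ 0) :
    n * a n = 4 * tanh (n * π / 2) / n ^ 3 - π / n ^ 2 := by
  unfold a
  field_simp

/-- The series `Σ_{n odd} n·a_n` (over odd positive integers) converges, with sum `0`;
equivalently `Σ_{n odd} (4·tanh(nπ/2)/n^3 − π/n^2) = 0`. -/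
theorem sum_n_a_n_eq_zero :
    HasSum (fun k : ℕ => (2 * (k : ℝ) + 1) * a (2 * k + 1)) 0 := by
  have hfib (k : ℕ) : HasSum (fun l : ℕ => doubleTerm (2 * k + 1) (2 * l + 1))
      (π / 8 * ((2 * (k : ℝ) + 1) * a (2 * k + 1))) := by
    have := natCast_mul_a (n := 2 * k + 1) (by omega)
    push_cast at this
    exact this ▸ hasSum_doubleTerm_odd (by positivity)
  have h := (summable_doubleTerm_odd.hasSum_zero_of_swap_eq_neg fun p =>
    doubleTerm_swap (by positivity) (by positivity)).prod_fiberwise hfib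
  rw [← mul_zero (π / 8)] at h
  exact (hasSum_mul_left_iff (by positivity)).mp h
end

section
/- For every odd positive integer n, the double integral I_n := ∫_0^{1/2} ∫_0^u [u(1−u) − v²] · ( s_n(u,v) + s_n(1−u,1−v) − s_n(v,u) − s_n(1−v,1−u) ) dv du equals (3/(2π^4)) · a_n · sinh(nπ), where s_n(x,y) := sin(nπx)·sinh(nπy) and a_n := (4/n^4)·tanh(nπ/2) − π/n^3. -/
/-- `s_n(x,y) = sin(nπx)·sinh(nπy)`. -/
noncomputable def sfun (n : ℕ) (x y : ℝ) : ℝ :=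
  Real.sin ((n : ℝ) * Real.pi * x) * Real.sinh ((n : ℝ) * Real.pi * y)

lemma hd_sin (k v : ℝ) : HasDerivAt (fun x : ℝ => Real.sin (k*x)) (Real.cos (k*v) * k) v := by
  simpa [Function.comp_def] using (Real.hasDerivAt_sin (k*v)).comp v ((hasDerivAt_id v).const_mul k)

lemma hd_cos (k v : ℝ) : HasDerivAt (fun x : ℝ => Real.cos (k*x)) (-Real.sin (k*v) * k) v := by
  simpa [Function.comp_def] using (Real.hasDerivAt_cos (k*v)).comp v ((hasDerivAt_id v).const_mul k)

lemma hd_sinh (k v : ℝ) : HasDerivAt (fun x : ℝ => Real.sinh (k*x)) (Real.cosh (k*v) * k) v := by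
  simpa [Function.comp_def] using (Real.hasDerivAt_sinh (k*v)).comp v ((hasDerivAt_id v).const_mul k)

lemma hd_cosh (k v : ℝ) : HasDerivAt (fun x : ℝ => Real.cosh (k*x)) (Real.sinh (k*v) * k) v := by
  simpa [Function.comp_def] using (Real.hasDerivAt_cosh (k*v)).comp v ((hasDerivAt_id v).const_mul k)

lemma hd_poly (c v : ℝ) : HasDerivAt (fun x : ℝ => c - x^2) (-(2*v)) v := by
  simpa [Pi.sub_def] using (hasDerivAt_const v c).sub (hasDerivAt_pow 2 v)

lemma hd_quad (p0 p1 p2 x : ℝ) :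
    HasDerivAt (fun t : ℝ => p0 + p1*t + p2*t^2) (p1 + 2*p2*x) x := by
  have := ((hasDerivAt_const x p0).add ((hasDerivAt_id x).const_mul p1)).add
    ((hasDerivAt_pow 2 x).const_mul p2)
  refine this.congr_deriv ?_
  norm_num
  ring

lemma inner_integral (k c Su A B Hu : ℝ) (hk : k ≠ 0) (u : ℝ) :
    (∫ v in (0:ℝ)..u,
        (c - v^2) * (Su * (A * Real.sinh (k*v) + B * Real.cosh (k*v)) - Real.sin (k*v) * Hu))
    = ((Su * (A * ((c - u^2)*k^2*Real.cosh (k*u) + 2*k*u*Real.sinh (k*u) - 2*Real.cosh (k*u))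
          + B * ((c - u^2)*k^2*Real.sinh (k*u) + 2*k*u*Real.cosh (k*u) - 2*Real.sinh (k*u)))
        - Hu * (-((c - u^2)*k^2*Real.cos (k*u)) - 2*k*u*Real.sin (k*u) - 2*Real.cos (k*u)))
      - (Su * (A * (c*k^2 - 2)) - Hu * (-(c*k^2) - 2))) / k^3 := by
  have key : ∀ v : ℝ, HasDerivAt
      (fun v : ℝ => (Su * (A * ((c - v^2)*k^2*Real.cosh (k*v) + 2*k*v*Real.sinh (k*v) - 2*Real.cosh (k*v))
          + B * ((c - v^2)*k^2*Real.sinh (k*v) + 2*k*v*Real.cosh (k*v) - 2*Real.sinh (k*v)))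
        - Hu * (-((c - v^2)*k^2*Real.cos (k*v)) - 2*k*v*Real.sin (k*v) - 2*Real.cos (k*v))) / k^3)
      ((c - v^2) * (Su * (A * Real.sinh (k*v) + B * Real.cosh (k*v)) - Real.sin (k*v) * Hu)) v := by
    intro v
    have h1 : HasDerivAt (fun x : ℝ => (c - x^2)*k^2*Real.cosh (k*x) + 2*k*x*Real.sinh (k*x) - 2*Real.cosh (k*x))
        ((c - v^2)*k^3*Real.sinh (k*v)) v := by
      exact ((((hd_poly c v).mul_const (k^2)).mul (hd_cosh k v)).add
        ((((hasDerivAt_id v).const_mul (2*k)).mul (hd_sinh k v)))).sub ((hd_cosh k v).const_mul 2)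
        |>.congr_deriv (by simp only [id_eq]; ring)
    have h2 : HasDerivAt (fun x : ℝ => (c - x^2)*k^2*Real.sinh (k*x) + 2*k*x*Real.cosh (k*x) - 2*Real.sinh (k*x))
        ((c - v^2)*k^3*Real.cosh (k*v)) v := by
      exact ((((hd_poly c v).mul_const (k^2)).mul (hd_sinh k v)).add
        ((((hasDerivAt_id v).const_mul (2*k)).mul (hd_cosh k v)))).sub ((hd_sinh k v).const_mul 2)
        |>.congr_deriv (by simp only [id_eq]; ring)
    have h3 : HasDerivAt (fun x : ℝ => -((c - x^2)*k^2*Real.cos (k*x)) - 2*k*x*Real.sin (k*x) - 2*Real.cos (k*x))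
        ((c - v^2)*k^3*Real.sin (k*v)) v := by
      exact (((((hd_poly c v).mul_const (k^2)).mul (hd_cos k v)).neg).sub
        ((((hasDerivAt_id v).const_mul (2*k)).mul (hd_sin k v)))).sub ((hd_cos k v).const_mul 2)
        |>.congr_deriv (by simp only [id_eq]; ring)
    have H := ((((h1.const_mul A).add (h2.const_mul B)).const_mul Su).sub (h3.const_mul Hu)).div_const (k^3)
    refine H.congr_deriv ?_
    field_simp
  rw [intervalIntegral.integral_eq_sub_of_hasDerivAt (fun v _ => key v)
    (by apply Continuous.intervalIntegrable; fun_prop)]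
  norm_num
  ring

noncomputable def Phi (k A B : ℝ) (x : ℝ) : ℝ :=
  ((6*A + (1/2)*k*B + (-(4*k*B))*x + 0*x^2) * (Real.cos (k*x) * Real.cosh (k*x))
   + ((1/2)*k*A + 6*B + (-(4*k*A))*x + 0*x^2) * (Real.cos (k*x) * Real.sinh (k*x))
   + ((-(1/2))*k*A + (4*k*A + k^2*B)*x + (-(2*k^2*B))*x^2) * (Real.sin (k*x) * Real.cosh (k*x))
   + ((-(1/2))*k*B + (k^2*A + 4*k*B)*x + (-(2*k^2*A))*x^2) * (Real.sin (k*x) * Real.sinh (k*x))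
   + ((-k)*A + (2*k*A)*x + 0*x^2) * Real.sin (k*x)
   + (0*A + (k^2*A)*x + (-(k^2*A))*x^2) * Real.cos (k*x)
   + (k*A + (-(2*k*A) - k^2*B)*x + (k^2*B)*x^2) * Real.sinh (k*x)
   + (k*B + (-(k^2*A) - 2*k*B)*x + (k^2*A)*x^2) * Real.cosh (k*x)) / k^4

lemma Phi_deriv (k A B : ℝ) (hk : k ≠ 0) (u : ℝ) :
    HasDerivAt (Phi k A B)
      (((Real.sin (k*u) * (A * ((u*(1-u) - u^2)*k^2*Real.cosh (k*u) + 2*k*u*Real.sinh (k*u) - 2*Real.cosh (k*u))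
          + B * ((u*(1-u) - u^2)*k^2*Real.sinh (k*u) + 2*k*u*Real.cosh (k*u) - 2*Real.sinh (k*u)))
        - (A*Real.sinh (k*u) + B*Real.cosh (k*u)) *
            (-((u*(1-u) - u^2)*k^2*Real.cos (k*u)) - 2*k*u*Real.sin (k*u) - 2*Real.cos (k*u)))
        - (Real.sin (k*u) * (A * (u*(1-u)*k^2 - 2))
           - (A*Real.sinh (k*u) + B*Real.cosh (k*u)) * (-(u*(1-u)*k^2) - 2))) / k^3) u := by
  unfold Phi
  have H :=
    (((((((((hd_quad (6*A + (1/2)*k*B) (-(4*k*B)) 0 u).mul ((hd_cos k u).mul (hd_cosh k u))).add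
      ((hd_quad ((1/2)*k*A + 6*B) (-(4*k*A)) 0 u).mul ((hd_cos k u).mul (hd_sinh k u)))).add
      ((hd_quad ((-(1/2))*k*A) (4*k*A + k^2*B) (-(2*k^2*B)) u).mul ((hd_sin k u).mul (hd_cosh k u)))).add
      ((hd_quad ((-(1/2))*k*B) (k^2*A + 4*k*B) (-(2*k^2*A)) u).mul ((hd_sin k u).mul (hd_sinh k u)))).add
      ((hd_quad ((-k)*A) (2*k*A) 0 u).mul (hd_sin k u))).add
      ((hd_quad (0*A) (k^2*A) (-(k^2*A)) u).mul (hd_cos k u))).add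
      ((hd_quad (k*A) (-(2*k*A) - k^2*B) (k^2*B) u).mul (hd_sinh k u))).add
      ((hd_quad (k*B) (-(k^2*A) - 2*k*B) (k^2*A) u).mul (hd_cosh k u))).div_const (k^4)
  refine H.congr_deriv ?_
  simp only [Pi.mul_apply]
  field_simp
  ring

lemma outer_integral (k A B : ℝ) (hk : k ≠ 0) :
    (∫ u in (0:ℝ)..(1/2),
      ((Real.sin (k*u) * (A * ((u*(1-u) - u^2)*k^2*Real.cosh (k*u) + 2*k*u*Real.sinh (k*u) - 2*Real.cosh (k*u))
          + B * ((u*(1-u) - u^2)*k^2*Real.sinh (k*u) + 2*k*u*Real.cosh (k*u) - 2*Real.sinh (k*u)))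
        - (A*Real.sinh (k*u) + B*Real.cosh (k*u)) *
            (-((u*(1-u) - u^2)*k^2*Real.cos (k*u)) - 2*k*u*Real.sin (k*u) - 2*Real.cos (k*u))
        - (Real.sin (k*u) * (A * (u*(1-u)*k^2 - 2))
           - (A*Real.sinh (k*u) + B*Real.cosh (k*u)) * (-(u*(1-u)*k^2) - 2))) / k^3))
    = Phi k A B (1/2) - Phi k A B 0 :=
  intervalIntegral.integral_eq_sub_of_hasDerivAt (fun u _ => Phi_deriv k A B hk u)
    (by apply Continuous.intervalIntegrable; fun_prop)

/-- For every odd positive integer `n`,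
`I_n = ∫_0^{1/2}∫_0^u [u(1−u)−v²](s_n(u,v)+s_n(1−u,1−v)−s_n(v,u)−s_n(1−v,1−u)) dv du
     = (3/(2π^4))·a_n·sinh(nπ)`. -/
theorem I_n_eval :
    ∀ n : ℕ, Odd n →
      (∫ u in (0:ℝ)..(1/2), ∫ v in (0:ℝ)..u,
          (u * (1 - u) - v ^ 2) *
            (sfun n u v + sfun n (1 - u) (1 - v) - sfun n v u - sfun n (1 - v) (1 - u)))
        = (3 / (2 * Real.pi ^ 4)) * a n * Real.sinh ((n : ℝ) * Real.pi) := by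
  intro n hn
  obtain ⟨m, hm⟩ := hn
  have hπ := Real.pi_pos
  have hn0 : ((n:ℝ)) ≠ 0 := Nat.cast_ne_zero.mpr (by omega)
  have hk : ((n:ℝ) * Real.pi) ≠ 0 := by
    apply mul_ne_zero hn0 (ne_of_gt hπ)
  have hsin : Real.sin ((n:ℝ)*Real.pi) = 0 := Real.sin_nat_mul_pi n
  have hcos : Real.cos ((n:ℝ)*Real.pi) = -1 := by
    rw [hm]
    push_cast
    rw [show (2*(m:ℝ)+1)*Real.pi = (m:ℝ)*(2*Real.pi) + Real.pi by ring]
    exact Real.cos_nat_mul_two_pi_add_pi m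
  have hcos2 : Real.cos ((n:ℝ)*Real.pi*(1/2)) = 0 := by
    rw [hm]
    push_cast
    rw [show (2*(m:ℝ)+1)*Real.pi*(1/2) = (m:ℝ)*Real.pi + Real.pi/2 by ring,
      Real.cos_add_pi_div_two, Real.sin_nat_mul_pi, neg_zero]
  have step1 : ∀ u : ℝ, (∫ v in (0:ℝ)..u, (u * (1 - u) - v ^ 2) *
        (sfun n u v + sfun n (1 - u) (1 - v) - sfun n v u - sfun n (1 - v) (1 - u)))
      = ((Real.sin ((n:ℝ)*Real.pi*u) * ((1 - Real.cosh ((n:ℝ)*Real.pi)) * ((u*(1-u) - u^2)*((n:ℝ)*Real.pi)^2*Real.cosh ((n:ℝ)*Real.pi*u) + 2*((n:ℝ)*Real.pi)*u*Real.sinh ((n:ℝ)*Real.pi*u) - 2*Real.cosh ((n:ℝ)*Real.pi*u))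
          + Real.sinh ((n:ℝ)*Real.pi) * ((u*(1-u) - u^2)*((n:ℝ)*Real.pi)^2*Real.sinh ((n:ℝ)*Real.pi*u) + 2*((n:ℝ)*Real.pi)*u*Real.cosh ((n:ℝ)*Real.pi*u) - 2*Real.sinh ((n:ℝ)*Real.pi*u)))
        - ((1 - Real.cosh ((n:ℝ)*Real.pi))*Real.sinh ((n:ℝ)*Real.pi*u) + Real.sinh ((n:ℝ)*Real.pi)*Real.cosh ((n:ℝ)*Real.pi*u)) *
            (-((u*(1-u) - u^2)*((n:ℝ)*Real.pi)^2*Real.cos ((n:ℝ)*Real.pi*u)) - 2*((n:ℝ)*Real.pi)*u*Real.sin ((n:ℝ)*Real.pi*u) - 2*Real.cos ((n:ℝ)*Real.pi*u))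
        - (Real.sin ((n:ℝ)*Real.pi*u) * ((1 - Real.cosh ((n:ℝ)*Real.pi)) * (u*(1-u)*((n:ℝ)*Real.pi)^2 - 2))
           - ((1 - Real.cosh ((n:ℝ)*Real.pi))*Real.sinh ((n:ℝ)*Real.pi*u) + Real.sinh ((n:ℝ)*Real.pi)*Real.cosh ((n:ℝ)*Real.pi*u)) * (-(u*(1-u)*((n:ℝ)*Real.pi)^2) - 2))) / ((n:ℝ)*Real.pi)^3) := by
    intro u
    have hpt : ∀ v : ℝ, (u * (1 - u) - v ^ 2) *
        (sfun n u v + sfun n (1 - u) (1 - v) - sfun n v u - sfun n (1 - v) (1 - u))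
        = (u*(1-u) - v^2) * (Real.sin ((n:ℝ)*Real.pi*u) *
            ((1 - Real.cosh ((n:ℝ)*Real.pi)) * Real.sinh ((n:ℝ)*Real.pi*v)
              + Real.sinh ((n:ℝ)*Real.pi) * Real.cosh ((n:ℝ)*Real.pi*v))
          - Real.sin ((n:ℝ)*Real.pi*v) *
            ((1 - Real.cosh ((n:ℝ)*Real.pi))*Real.sinh ((n:ℝ)*Real.pi*u)
              + Real.sinh ((n:ℝ)*Real.pi)*Real.cosh ((n:ℝ)*Real.pi*u))) := by
      intro v
      simp only [sfun, mul_one_sub, Real.sin_sub, Real.sinh_sub, hsin, hcos]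
      ring
    rw [intervalIntegral.integral_congr (fun v _ => hpt v)]
    have := inner_integral ((n:ℝ)*Real.pi) (u*(1-u)) (Real.sin ((n:ℝ)*Real.pi*u))
      (1 - Real.cosh ((n:ℝ)*Real.pi)) (Real.sinh ((n:ℝ)*Real.pi))
      ((1 - Real.cosh ((n:ℝ)*Real.pi))*Real.sinh ((n:ℝ)*Real.pi*u)
        + Real.sinh ((n:ℝ)*Real.pi)*Real.cosh ((n:ℝ)*Real.pi*u)) hk u
    rw [this]
  rw [intervalIntegral.integral_congr (fun u _ => step1 u),
    outer_integral ((n:ℝ)*Real.pi) (1 - Real.cosh ((n:ℝ)*Real.pi)) (Real.sinh ((n:ℝ)*Real.pi)) hk]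
  -- final algebra
  have hc2 : (0:ℝ) < Real.cosh ((n:ℝ)*Real.pi*(1/2)) := Real.cosh_pos _
  have hch : Real.cosh ((n:ℝ)*Real.pi) = 2*Real.sinh ((n:ℝ)*Real.pi*(1/2))^2 + 1 := by
    conv_lhs => rw [show (n:ℝ)*Real.pi = 2*((n:ℝ)*Real.pi*(1/2)) by ring, Real.cosh_two_mul,
      Real.cosh_sq]
    ring
  have hsh : Real.sinh ((n:ℝ)*Real.pi)
      = 2*Real.sinh ((n:ℝ)*Real.pi*(1/2))*Real.cosh ((n:ℝ)*Real.pi*(1/2)) := by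
    conv_lhs => rw [show (n:ℝ)*Real.pi = 2*((n:ℝ)*Real.pi*(1/2)) by ring, Real.sinh_two_mul]
  have htanh : Real.tanh ((n:ℝ)*Real.pi/2)
      = Real.sinh ((n:ℝ)*Real.pi*(1/2)) / Real.cosh ((n:ℝ)*Real.pi*(1/2)) := by
    rw [show (n:ℝ)*Real.pi/2 = (n:ℝ)*Real.pi*(1/2) by ring, Real.tanh_eq_sinh_div_cosh]
  unfold Phi a
  rw [htanh, hch, hsh, hcos2]
  norm_num [Real.cosh_zero, Real.sinh_zero]
  field_simp
  ring
end

section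
/- For every odd positive integer n, ∫_0^{1/2} ∫_0^x x(1−2x) · ( c_n(y,x) − c_n(x,y) ) dy dx = (sin(nπ/2)/π^4) · ( 2·sinh(nπ/2)/n^4 − π·cosh(nπ/2)/(2n^3) ), where c_n(x,y) := cos(nπx)·cosh(nπy). -/
/-!
With `a = nπ`, the inner integral is elementary: its primitive in `y` is
`(sin(ay) cosh(ax) - cos(ax) sinh(ay)) / a`. The outer integrand is then
`x(1-2x)(sin cosh - cos sinh)(ax) / a`, which is integrated by parts twice against the weight
`x(1-2x)`; that weight vanishes at both endpoints `0` and `1/2`. For odd `n`, `cos(nπ/2) = 0`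
removes the remaining `cos` term.
-/

/-- `c_n(x,y) = cos(nπx)·cosh(nπy)`. -/
noncomputable def cfun (n : ℕ) (x y : ℝ) : ℝ :=
  Real.cos ((n : ℝ) * Real.pi * x) * Real.cosh ((n : ℝ) * Real.pi * y)

open Real

section
variable {a : ℝ}

theorem integral_cos_mul_cosh_sub_cos_mul_cosh (ha : a ≠ 0) (x : ℝ) :
    ∫ y in (0:ℝ)..x, (cos (a * y) * cosh (a * x) - cos (a * x) * cosh (a * y))
      = (sin (a * x) * cosh (a * x) - cos (a * x) * sinh (a * x)) / a := by
  have hderiv : ∀ y ∈ Set.uIcc 0 x, HasDerivAt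
      (fun y => (sin (a * y) * cosh (a * x) - cos (a * x) * sinh (a * y)) / a)
      (cos (a * y) * cosh (a * x) - cos (a * x) * cosh (a * y)) y := by
    intro y _
    refine ((((hasDerivAt_const_mul a).sin.mul_const (cosh (a * x))).sub
      ((hasDerivAt_const_mul a).sinh.const_mul (cos (a * x)))).div_const a).congr_deriv ?_
    field_simp
  rw [intervalIntegral.integral_eq_sub_of_hasDerivAt hderiv
    (by apply Continuous.intervalIntegrable; fun_prop)]
  simp

/- Two integrations by parts, using `(cos·cosh)(at)' = -a (sin·cosh - cos·sinh)(at)`,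
`(sin·cosh + cos·sinh)(at)' = 2a (cos·cosh)(at)` and `(sin·sinh)(at)' = a (sin·cosh + cos·sinh)(at)`. -/
theorem hasDerivAt_primitive_weighted_sin_mul_cosh_sub_cos_mul_sinh (x : ℝ) (ha : a ≠ 0) :
    HasDerivAt (fun t => 2 / a ^ 3 * (sin (a * t) * sinh (a * t))
        + (1 - 4 * t) / (2 * a ^ 2) * (sin (a * t) * cosh (a * t) + cos (a * t) * sinh (a * t))
        - (t - 2 * t ^ 2) / a * (cos (a * t) * cosh (a * t)))
      ((x - 2 * x ^ 2) * (sin (a * x) * cosh (a * x) - cos (a * x) * sinh (a * x))) x := by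
  have hsin := (hasDerivAt_const_mul (x := x) a).sin
  have hcos := (hasDerivAt_const_mul (x := x) a).cos
  have hsinh := (hasDerivAt_const_mul (x := x) a).sinh
  have hcosh := (hasDerivAt_const_mul (x := x) a).cosh
  have hlin : HasDerivAt (fun t : ℝ => (1 - 4 * t) / (2 * a ^ 2)) (-4 / (2 * a ^ 2)) x := by
    simpa using ((hasDerivAt_const_mul 4).const_sub 1).div_const (2 * a ^ 2)
  have hquad : HasDerivAt (fun t : ℝ => (t - 2 * t ^ 2) / a) ((1 - 4 * x) / a) x := by
    refine (((hasDerivAt_id x).sub ((hasDerivAt_pow 2 x).const_mul 2)).div_const a).congr_deriv ?_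
    simp only [Nat.cast_ofNat]
    ring
  refine ((((hsin.mul hsinh).const_mul (2 / a ^ 3)).add
    (hlin.mul ((hsin.mul hcosh).add (hcos.mul hsinh)))).sub
      (hquad.mul (hcos.mul hcosh))).congr_deriv ?_
  simp only [Pi.mul_apply, Pi.add_apply]
  field_simp
  ring

theorem integral_weighted_sin_mul_cosh_sub_cos_mul_sinh (ha : a ≠ 0) :
    ∫ x in (0:ℝ)..1/2, (x - 2 * x ^ 2) * (sin (a * x) * cosh (a * x) - cos (a * x) * sinh (a * x))
      = 2 / a ^ 3 * (sin (a / 2) * sinh (a / 2))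
        - (sin (a / 2) * cosh (a / 2) + cos (a / 2) * sinh (a / 2)) / (2 * a ^ 2) := by
  rw [intervalIntegral.integral_eq_sub_of_hasDerivAt
    (fun x _ => hasDerivAt_primitive_weighted_sin_mul_cosh_sub_cos_mul_sinh x ha)
    (by apply Continuous.intervalIntegrable; fun_prop)]
  norm_num
  field_simp
  ring

end

theorem cos_nat_mul_pi_div_two_of_odd {n : ℕ} (hn : Odd n) : cos (n * π / 2) = 0 := by
  obtain ⟨k, rfl⟩ := hn
  exact cos_eq_zero_iff.mpr ⟨k, by push_cast; ring⟩

/-- For every odd positive integer `n`,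
`∫_0^{1/2}∫_0^x x(1−2x)(c_n(y,x)−c_n(x,y)) dy dx
  = (sin(nπ/2)/π^4)·(2sinh(nπ/2)/n^4 − πcosh(nπ/2)/(2n^3))`. -/
theorem I_n1_eval :
    ∀ n : ℕ, Odd n →
      (∫ x in (0:ℝ)..(1/2), ∫ y in (0:ℝ)..x,
          x * (1 - 2 * x) * (cfun n y x - cfun n x y))
        = (Real.sin ((n : ℝ) * Real.pi / 2) / Real.pi ^ 4) *
            (2 * Real.sinh ((n : ℝ) * Real.pi / 2) / (n : ℝ) ^ 4
              - Real.pi * Real.cosh ((n : ℝ) * Real.pi / 2) / (2 * (n : ℝ) ^ 3)) := by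
  intro n hn
  have ha : (n : ℝ) * π ≠ 0 := mul_ne_zero (Nat.cast_ne_zero.mpr hn.pos.ne') pi_ne_zero
  have inner (x : ℝ) : ∫ y in (0:ℝ)..x, x * (1 - 2 * x) * (cfun n y x - cfun n x y)
      = (x - 2 * x ^ 2) * (sin (n * π * x) * cosh (n * π * x) - cos (n * π * x) * sinh (n * π * x))
        / (n * π) := by
    rw [intervalIntegral.integral_const_mul]
    simp only [cfun, integral_cos_mul_cosh_sub_cos_mul_cosh ha]
    ring
  rw [intervalIntegral.integral_congr (fun x _ => inner x), intervalIntegral.integral_div,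
    integral_weighted_sin_mul_cosh_sub_cos_mul_sinh ha, cos_nat_mul_pi_div_two_of_odd hn]
  field_simp
  ring
end

section
/- For every odd positive integer n, ∫_0^{1/2} ∫_0^x (x² − y²) · ( c_n(y,x) − c_n(x,y) ) dy dx = (sin(nπ/2)/π^4) · ( 4·sinh(nπ/2)/n^4 − π·cosh(nπ/2)/n^3 ), where c_n(x,y) := cos(nπx)·cosh(nπy). -/
open Real intervalIntegral

section

variable {a : ℝ}

theorem integral_sq_sub_sq_mul_cos (ha : a ≠ 0) (x : ℝ) :
    ∫ y in (0:ℝ)..x, (x ^ 2 - y ^ 2) * cos (a * y) =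
      2 * sin (a * x) / a ^ 3 - 2 * x * cos (a * x) / a ^ 2 := by
  have hderiv (y : ℝ) : HasDerivAt
      (fun y => (x ^ 2 - y ^ 2) * sin (a * y) / a - 2 * y * cos (a * y) / a ^ 2
        + 2 * sin (a * y) / a ^ 3) ((x ^ 2 - y ^ 2) * cos (a * y)) y := by
    have hay : HasDerivAt (fun y => a * y) a y := hasDerivAt_const_mul a
    refine (((((hasDerivAt_pow 2 y).const_sub (x ^ 2)).fun_mul hay.sin).div_const a).sub
      ((((hasDerivAt_id' y).const_mul 2).fun_mul hay.cos).div_const (a ^ 2))).add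
      ((hay.sin.const_mul 2).div_const (a ^ 3)) |>.congr_deriv ?_
    field_simp
    ring
  rw [integral_eq_sub_of_hasDerivAt (fun y _ => hderiv y)
    ((by fun_prop : Continuous _).intervalIntegrable _ _)]
  simp only [mul_zero, sin_zero, cos_zero]
  ring

theorem integral_sq_sub_sq_mul_cosh (ha : a ≠ 0) (x : ℝ) :
    ∫ y in (0:ℝ)..x, (x ^ 2 - y ^ 2) * cosh (a * y) =
      2 * x * cosh (a * x) / a ^ 2 - 2 * sinh (a * x) / a ^ 3 := by
  have hderiv (y : ℝ) : HasDerivAt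
      (fun y => (x ^ 2 - y ^ 2) * sinh (a * y) / a + 2 * y * cosh (a * y) / a ^ 2
        - 2 * sinh (a * y) / a ^ 3) ((x ^ 2 - y ^ 2) * cosh (a * y)) y := by
    have hay : HasDerivAt (fun y => a * y) a y := hasDerivAt_const_mul a
    refine (((((hasDerivAt_pow 2 y).const_sub (x ^ 2)).fun_mul hay.sinh).div_const a).add
      ((((hasDerivAt_id' y).const_mul 2).fun_mul hay.cosh).div_const (a ^ 2))).sub
      ((hay.sinh.const_mul 2).div_const (a ^ 3)) |>.congr_deriv ?_
    field_simp
    ring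
  rw [integral_eq_sub_of_hasDerivAt (fun y _ => hderiv y)
    ((by fun_prop : Continuous _).intervalIntegrable _ _)]
  simp only [mul_zero, sinh_zero, cosh_zero]
  ring

theorem integral_sq_sub_sq_mul_cos_mul_cosh_sub (ha : a ≠ 0) (x : ℝ) :
    ∫ y in (0:ℝ)..x,
        (x ^ 2 - y ^ 2) * (cos (a * y) * cosh (a * x) - cos (a * x) * cosh (a * y)) =
      2 * (sin (a * x) * cosh (a * x) + cos (a * x) * sinh (a * x)) / a ^ 3
        - 4 * x * cos (a * x) * cosh (a * x) / a ^ 2 := by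
  have hsplit :
      (fun y => (x ^ 2 - y ^ 2) * (cos (a * y) * cosh (a * x) - cos (a * x) * cosh (a * y))) =
        fun y => cosh (a * x) * ((x ^ 2 - y ^ 2) * cos (a * y))
          - cos (a * x) * ((x ^ 2 - y ^ 2) * cosh (a * y)) := by
    ext y
    ring
  rw [hsplit, integral_sub ((by fun_prop : Continuous _).intervalIntegrable _ _)
      ((by fun_prop : Continuous _).intervalIntegrable _ _),
    integral_const_mul, integral_const_mul, integral_sq_sub_sq_mul_cos ha,
    integral_sq_sub_sq_mul_cosh ha]
  ring

theorem integral_sin_mul_cosh_add_cos_mul_sinh_sub (ha : a ≠ 0) (b : ℝ) :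
    ∫ x in (0:ℝ)..b, (2 * (sin (a * x) * cosh (a * x) + cos (a * x) * sinh (a * x)) / a ^ 3
        - 4 * x * cos (a * x) * cosh (a * x) / a ^ 2) =
      (4 * sin (a * b) * sinh (a * b) / a
        - 2 * b * (sin (a * b) * cosh (a * b) + cos (a * b) * sinh (a * b))) / a ^ 3 := by
  have hderiv (x : ℝ) : HasDerivAt
      (fun x => (4 * sin (a * x) * sinh (a * x) / a
        - 2 * x * (sin (a * x) * cosh (a * x) + cos (a * x) * sinh (a * x))) / a ^ 3)
      (2 * (sin (a * x) * cosh (a * x) + cos (a * x) * sinh (a * x)) / a ^ 3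
        - 4 * x * cos (a * x) * cosh (a * x) / a ^ 2) x := by
    have hax : HasDerivAt (fun x => a * x) a x := hasDerivAt_const_mul a
    refine (((((hax.sin.const_mul 4).fun_mul hax.sinh).div_const a).sub
      (((hasDerivAt_id' x).const_mul 2).fun_mul
        ((hax.sin.fun_mul hax.cosh).fun_add (hax.cos.fun_mul hax.sinh)))).div_const (a ^ 3))
      |>.congr_deriv ?_
    field_simp
    ring
  rw [integral_eq_sub_of_hasDerivAt (fun x _ => hderiv x)
    ((by fun_prop : Continuous _).intervalIntegrable _ _)]
  simp only [mul_zero, sin_zero, sinh_zero]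
  ring

end

/-- For every odd positive integer `n`,
`∫_0^{1/2}∫_0^x (x²−y²)(c_n(y,x)−c_n(x,y)) dy dx
  = (sin(nπ/2)/π^4)·(4sinh(nπ/2)/n^4 − πcosh(nπ/2)/n^3)`. -/
theorem I_n2_eval :
    ∀ n : ℕ, Odd n →
      (∫ x in (0:ℝ)..(1/2), ∫ y in (0:ℝ)..x,
          (x ^ 2 - y ^ 2) * (cfun n y x - cfun n x y))
        = (Real.sin ((n : ℝ) * Real.pi / 2) / Real.pi ^ 4) *
            (4 * Real.sinh ((n : ℝ) * Real.pi / 2) / (n : ℝ) ^ 4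
              - Real.pi * Real.cosh ((n : ℝ) * Real.pi / 2) / (n : ℝ) ^ 3) := by
  rintro n ⟨k, rfl⟩
  have ha : ((2 * k + 1 : ℕ) : ℝ) * π ≠ 0 := by positivity
  have hcos : cos (((2 * k + 1 : ℕ) : ℝ) * π * (1 / 2)) = 0 :=
    cos_eq_zero_iff.2 ⟨k, by push_cast; ring⟩
  simp only [cfun]
  rw [integral_congr (fun x _ => integral_sq_sub_sq_mul_cos_mul_cosh_sub ha x),
    integral_sin_mul_cosh_add_cos_mul_sinh_sub ha, hcos]
  field_simp
  ring
end
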